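/- arXiv:1305.5713 — 7 statements merged into one kernel-verified Lean document; each statement's English description precedes it below -/
import Mathlib

section
/- For natural numbers a, m, n with 0 < a < 2^m, the base-2^m digits of ((a * 2^(n*m)) - a) / (2^m - 1) in positions 0 through n-1 all equal a, and the digits in positions ≥ n are 0. -/
/-!
`(a * B ^ n - a) / (B - 1) = a * (1 + B + ⋯ + B ^ (n - 1))` is the number whose base-`B` digit
list is `a` repeated `n` times; since `0 < a < B` that list is a valid digit expansion, so its
`i`-th entry, `a` for `i < n` and `0` beyond, is the `i`-th base-`B` digit.
-/

open Finset

namespace Nat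

theorem ofDigits_div_pow_mod {b : ℕ} (hb : 1 < b) {L : List ℕ} (w₁ : ∀ l ∈ L, l < b)
    (w₂ : ∀ h : L ≠ [], L.getLast h ≠ 0) (i : ℕ) : ofDigits b L / b ^ i % b = L.getD i 0 := by
  rw [← getD_digits _ _ hb, digits_ofDigits b hb L w₁ w₂]

theorem ofDigits_replicate (b a n : ℕ) :
    ofDigits b (List.replicate n a) = a * ∑ i ∈ range n, b ^ i := by
  induction n with
  | zero => simp
  | succ n ih =>
    rw [List.replicate_succ, ofDigits_cons, ih, sum_range_succ']
    simp only [pow_succ, ← sum_mul]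
    ring

theorem ofDigits_replicate_eq_div {b : ℕ} (hb : 1 < b) (a n : ℕ) :
    ofDigits b (List.replicate n a) = (a * b ^ n - a) / (b - 1) := by
  have hgeom : b ^ n - 1 = (∑ i ∈ range n, b ^ i) * (b - 1) := by
    have := geom_sum_mul_add (b - 1) n
    rw [Nat.sub_add_cancel hb.le] at this
    omega
  rw [ofDigits_replicate, ← Nat.mul_sub_one, hgeom, ← mul_assoc,
    Nat.mul_div_cancel _ (by omega)]

end Nat

theorem vector_of_constants_digits (a m n : ℕ) (ha : 0 < a) (ham : a < 2 ^ m) :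
    (∀ i < n, ((a * 2 ^ (n * m) - a) / (2 ^ m - 1)) / 2 ^ (m * i) % 2 ^ m = a) ∧
    (∀ i ≥ n, ((a * 2 ^ (n * m) - a) / (2 ^ m - 1)) / 2 ^ (m * i) % 2 ^ m = 0) := by
  have hb : 1 < 2 ^ m := by omega
  have hdigit (i : ℕ) :
      ((a * 2 ^ (n * m) - a) / (2 ^ m - 1)) / 2 ^ (m * i) % 2 ^ m
        = (List.replicate n a).getD i 0 := by
    rw [mul_comm n m, pow_mul, pow_mul, ← Nat.ofDigits_replicate_eq_div hb,
      Nat.ofDigits_div_pow_mod hb]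
    · simpa [List.mem_replicate] using fun _ => ham
    · simpa [List.getLast_replicate] using fun _ => ha.ne'
  refine ⟨fun i hi => ?_, fun i hi => ?_⟩
  · rw [hdigit, List.getD_replicate _ hi]
  · rw [hdigit, List.getD_eq_default _ _ (by simpa using hi)]
end

section
/- Natural (truncated) subtraction can be expressed via addition and bitwise Boolean operations: for naturals a, b, letting set(a) = a OR (bitwise negation of a up to its most significant 1 bit), if set(b) OR set(a) = set(a) and not (set(a) = set(b) and (a + ¬b) AND (set(a)+1) = 0), then a - b (truncated subtraction) equals (a + ¬(b + set(a))) AND set(a), where ¬x denotes bitwise negation of x up to and including its most significant 1 bit. -/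
/-!
With `n = size a` we have `set a = 2ⁿ - 1` and `¬x = 2^(size x) - 1 - x`. The first hypothesis
says `b < 2ⁿ`. For `0 < b` the number `b + set a` then has bit length `n + 1`, so
`¬(b + set a) = 2ⁿ - b`, and masking with `set a` computes `(a + 2ⁿ - b) mod 2ⁿ`, which is
`a - b` as soon as `b ≤ a`. The second hypothesis rules out exactly `a < b < 2ⁿ`: then `b` has
the same bit length as `a`, and `a + ¬b < 2ⁿ` has bit `n` clear.
-/

/-- Bitwise negation of `a` up to and including its most significant `1` bit. -/
def negUp (a : ℕ) : ℕ := (2 ^ Nat.size a - 1) ^^^ a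

/-- `set a = a OR ¬a`, the all-ones mask of the bit-length of `a`. -/
def setBits (a : ℕ) : ℕ := a ||| negUp a

namespace Nat

theorem two_pow_sub_one_xor_of_lt {n a : ℕ} (h : a < 2 ^ n) :
    (2 ^ n - 1) ^^^ a = 2 ^ n - 1 - a := by
  have h1 := BitVec.toNat_not (x := BitVec.ofNat n a)
  rw [BitVec.not_def] at h1
  simpa only [BitVec.toNat_xor, BitVec.toNat_allOnes, BitVec.toNat_ofNat,
    mod_eq_of_lt h] using h1

theorem size_eq_succ_of_two_pow_le_of_lt {m n : ℕ} (hle : 2 ^ n ≤ m) (hlt : m < 2 ^ (n + 1)) :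
    size m = n + 1 :=
  le_antisymm (size_le.2 hlt) (lt_size.2 hle)

theorem size_two_pow_sub_one (n : ℕ) : size (2 ^ n - 1) = n := by
  cases n with
  | zero => rfl
  | succ n =>
    apply size_eq_succ_of_two_pow_le_of_lt <;> rw [pow_succ] <;> have := n.one_le_two_pow <;> omega

theorem sub_eq_add_sub_mod {a b m : ℕ} (hba : b ≤ a) (ha : a < m) :
    a - b = (a + (m - b)) % m := by
  rw [show a + (m - b) = a - b + m by omega, add_mod_right, mod_eq_of_lt (by omega)]

end Nat

open Nat

theorem negUp_eq_two_pow_size_sub_one_sub (a : ℕ) : negUp a = 2 ^ size a - 1 - a :=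
  two_pow_sub_one_xor_of_lt (lt_size_self a)

theorem setBits_eq_two_pow_size_sub_one (a : ℕ) : setBits a = 2 ^ size a - 1 := by
  apply Nat.eq_of_testBit_eq
  intro i
  simp only [setBits, negUp, Nat.testBit_or, Nat.testBit_xor, Nat.testBit_two_pow_sub_one]
  by_cases hi : i < size a
  · cases a.testBit i <;> simp [hi]
  · have ha : a.testBit i = false :=
      Nat.testBit_lt_two_pow
        ((lt_size_self a).trans_le (Nat.pow_le_pow_right two_pos (not_lt.1 hi)))
    simp [hi, ha]

theorem lt_two_pow_size_of_setBits_le {a b : ℕ} (h : setBits b ≤ setBits a) :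
    b < 2 ^ size a := by
  simp only [setBits_eq_two_pow_size_sub_one] at h
  have := lt_size_self b
  have := (size a).one_le_two_pow
  omega

theorem negUp_setBits (a : ℕ) : negUp (setBits a) = 0 := by
  rw [setBits_eq_two_pow_size_sub_one, negUp, size_two_pow_sub_one, Nat.xor_self]

theorem negUp_add_setBits {a b : ℕ} (hb0 : 0 < b) (hb : b < 2 ^ size a) :
    negUp (b + setBits a) = 2 ^ size a - b := by
  have hsize : size (b + setBits a) = size a + 1 := by
    rw [setBits_eq_two_pow_size_sub_one]
    apply size_eq_succ_of_two_pow_le_of_lt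
    · omega
    · rw [pow_succ]; omega
  rw [negUp_eq_two_pow_size_sub_one_sub, hsize, setBits_eq_two_pow_size_sub_one, pow_succ]
  omega

theorem size_eq_of_le_of_lt_two_pow_size {a b : ℕ} (hab : a ≤ b) (hb : b < 2 ^ size a) :
    size b = size a :=
  le_antisymm (size_le.2 hb) (size_le_size hab)

theorem add_negUp_and_setBits_succ_eq_zero {a b : ℕ} (hab : a < b) (hb : b < 2 ^ size a) :
    (a + negUp b) &&& (setBits a + 1) = 0 := by
  have hlt : a + negUp b < 2 ^ size a := by
    rw [negUp_eq_two_pow_size_sub_one_sub, size_eq_of_le_of_lt_two_pow_size hab.le hb]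
    omega
  rw [setBits_eq_two_pow_size_sub_one, Nat.sub_add_cancel (size a).one_le_two_pow,
    Nat.and_two_pow, Nat.testBit_lt_two_pow hlt, Bool.toNat_false, zero_mul]

theorem truncated_sub_via_bool (a b : ℕ)
    (h1 : setBits b ||| setBits a = setBits a)
    (h2 : ¬(setBits a = setBits b ∧ (a + negUp b) &&& (setBits a + 1) = 0)) :
    a - b = (a + negUp (b + setBits a)) &&& setBits a := by
  have hb : b < 2 ^ size a := lt_two_pow_size_of_setBits_le (h1 ▸ Nat.left_le_or)
  have hba : b ≤ a := by
    by_contra! hab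
    refine h2 ⟨?_, add_negUp_and_setBits_succ_eq_zero hab hb⟩
    simp only [setBits_eq_two_pow_size_sub_one, size_eq_of_le_of_lt_two_pow_size hab.le hb]
  rcases b.eq_zero_or_pos with rfl | hb0
  · rw [zero_add, negUp_setBits, add_zero, setBits_eq_two_pow_size_sub_one,
      Nat.and_two_pow_sub_one_eq_mod, Nat.mod_eq_of_lt (lt_size_self a), Nat.sub_zero]
  · rw [negUp_add_setBits hb0 hb, setBits_eq_two_pow_size_sub_one, Nat.and_two_pow_sub_one_eq_mod,
      sub_eq_add_sub_mod hba (lt_size_self a)]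
end

section
/- Let A be an integer expressed as A = Σ_{j} c_j 2^{e_j} where the c_j are integers with Σ_j |c_j| ≤ 2^M, and suppose p is a natural number such that every exponent e_j satisfies either e_j > p or e_j < p - M - 2. If additionally A ≥ 0, then bits p-1 and p of A are equal (both 0 or both 1); in particular p is not an 'interesting' bit position of A. -/
/-!
Split `A = H + L`, where `H` collects the terms with `e j > p` and is a multiple of
`2 ^ (p + 1)`, and `L` the others, so that `4 * |L| ≤ 2 ^ (p - 1)`. Then
`⌊L / 2 ^ (p - 1)⌋ = ⌊L / 2 ^ p⌋` (both `0` or both `-1`), and since `H` shifts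
`⌊A / 2 ^ (p - 1)⌋` and `⌊A / 2 ^ p⌋` by even amounts, both bits equal the parity of that value.
-/

open Finset

namespace Int

lemma ediv_two_mul_eq_ediv {L d : ℤ} (hL : -d ≤ L) (hLd : L < d) : L / (2 * d) = L / d := by
  rcases le_or_gt 0 L with hL0 | hL0
  · rw [ediv_eq_zero_of_lt hL0 (by omega), ediv_eq_zero_of_lt hL0 hLd]
  · rw [ediv_eq_neg_one_of_neg_of_le hL0 (by omega), ediv_eq_neg_one_of_neg_of_le hL0 (by omega)]

lemma ediv_two_mul_emod_two_eq_of_dvd_sub {A L d : ℤ} (hd : 0 < d) (hdvd : 4 * d ∣ A - L)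
    (hL : -d ≤ L) (hLd : L < d) : A / (2 * d) % 2 = A / d % 2 := by
  obtain ⟨K, hK⟩ := hdvd
  have h₁ : A / (2 * d) = L / (2 * d) + 2 * K := by
    rw [show A = L + 2 * K * (2 * d) by linear_combination hK, add_mul_ediv_right _ _ (by omega)]
  have h₂ : A / d = L / d + 4 * K := by
    rw [show A = L + 4 * K * d by linear_combination hK, add_mul_ediv_right _ _ hd.ne']
  rw [h₁, h₂, ediv_two_mul_eq_ediv hL hLd]
  omega

end Int

lemma abs_sum_mul_le {ι R : Type*} [Ring R] [LinearOrder R] [IsStrictOrderedRing R]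
    (s : Finset ι) (c x : ι → R) {B : R} (hx : ∀ j ∈ s, |x j| ≤ B) :
    |∑ j ∈ s, c j * x j| ≤ (∑ j ∈ s, |c j|) * B :=
  calc |∑ j ∈ s, c j * x j| ≤ ∑ j ∈ s, |c j| * |x j| := by
        simpa only [abs_mul] using abs_sum_le_sum_abs (fun j ↦ c j * x j) s
    _ ≤ ∑ j ∈ s, |c j| * B :=
        sum_le_sum fun j hj ↦ mul_le_mul_of_nonneg_left (hx j hj) (abs_nonneg _)
    _ = (∑ j ∈ s, |c j|) * B := (sum_mul ..).symm

lemma four_mul_abs_sum_mul_two_pow_le {ι : Type*} (s : Finset ι) (c : ι → ℤ) (e : ι → ℕ)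
    {M q : ℕ} (hc : ∑ j ∈ s, |c j| ≤ 2 ^ M) (he : ∀ j ∈ s, e j + M + 2 ≤ q) :
    4 * |∑ j ∈ s, c j * 2 ^ e j| ≤ 2 ^ q := by
  have hterm : ∀ j ∈ s, |2 ^ (M + 2) * (2 : ℤ) ^ e j| ≤ 2 ^ q := fun j hj ↦ by
    rw [← pow_add, abs_pow, abs_two]
    exact pow_le_pow_right₀ one_le_two (by linarith [he j hj])
  have h : 2 ^ M * (4 * |∑ j ∈ s, c j * 2 ^ e j|) ≤ 2 ^ M * 2 ^ q :=
    calc 2 ^ M * (4 * |∑ j ∈ s, c j * 2 ^ e j|)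
        = |∑ j ∈ s, c j * (2 ^ (M + 2) * 2 ^ e j)| := by
          simp_rw [mul_left_comm (c _), ← mul_sum, abs_mul, abs_pow, abs_two]
          ring
      _ ≤ (∑ j ∈ s, |c j|) * 2 ^ q := abs_sum_mul_le s c _ hterm
      _ ≤ 2 ^ M * 2 ^ q := mul_le_mul_of_nonneg_right hc (by positivity)
  exact le_of_mul_le_mul_left h (by positivity)

theorem no_interesting_bit {ι : Type*} (s : Finset ι) (c : ι → ℤ) (e : ι → ℕ)
    (M p : ℕ) (hp : 1 ≤ p) (A : ℤ)
    (hA : A = ∑ j ∈ s, c j * 2 ^ (e j))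
    (hc : ∑ j ∈ s, |c j| ≤ 2 ^ M)
    (he : ∀ j ∈ s, (p : ℤ) < e j ∨ (e j : ℤ) < (p : ℤ) - M - 2)
    (h0 : 0 ≤ A) :
    A.toNat / 2 ^ p % 2 = A.toNat / 2 ^ (p - 1) % 2 := by
  obtain ⟨q, rfl⟩ := Nat.exists_eq_add_of_le' hp
  classical
  set low := s.filter fun j ↦ e j ≤ q + 1
  set L := ∑ j ∈ low, c j * 2 ^ e j
  have hhigh : 2 ^ (q + 2) ∣ A - L := by
    rw [hA, ← sum_filter_add_sum_filter_not s (fun j ↦ e j ≤ q + 1), add_sub_cancel_left]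
    refine dvd_sum fun j hj ↦ dvd_mul_of_dvd_right (pow_dvd_pow 2 ?_) _
    simp only [mem_filter] at hj
    omega
  have hL : 4 * |L| ≤ 2 ^ q := by
    refine four_mul_abs_sum_mul_two_pow_le low c e
      ((sum_le_sum_of_subset_of_nonneg (filter_subset _ s) fun _ _ _ ↦ abs_nonneg _).trans hc)
      fun j hj ↦ ?_
    simp only [low, mem_filter] at hj
    have := he j hj.1
    omega
  have hq : (0 : ℤ) < 2 ^ q := by positivity
  have hbits := Int.ediv_two_mul_emod_two_eq_of_dvd_sub hq
    (by rwa [show (4 : ℤ) * 2 ^ q = 2 ^ (q + 2) by ring]) (by linarith [neg_abs_le L])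
    (by linarith [le_abs_self L])
  rw [← pow_succ', ← Int.toNat_of_nonneg h0] at hbits
  exact_mod_cast hbits
end

section
/- If H is an integer multiple of 2^(p+1) and L is an integer with |L| < 2^(p-1), and A = H + L is nonnegative, then bit p and bit p-1 of A are equal. -/
/-!
Write `b = 2 ^ (p - 1)`. Since `4b ∣ H`, the quotients of `A = H + L` by `2b` and by `b` are
`H / (2b) + L / (2b)` and `H / b + L / b`, where `H / (2b)` and `H / b` are even. A perturbation with
`|L| < b` has the same floor quotient by `b` and by `2b`, namely `0` or `-1` according to its sign,
so both quotients have the same parity.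
-/

namespace Int

theorem ediv_eq_ite_of_abs_lt {a b : ℤ} (h : |a| < b) : a / b = if 0 ≤ a then 0 else -1 := by
  obtain ⟨hlo, hhi⟩ := abs_lt.mp h
  split_ifs with ha
  · exact ediv_eq_zero_of_lt ha hhi
  · exact ediv_eq_neg_one_of_neg_of_le (not_le.mp ha) (by linarith)

theorem add_ediv_two_mul_emod_two_eq {b H L : ℤ} (hH : 4 * b ∣ H) (hL : |L| < b) :
    (H + L) / (2 * b) % 2 = (H + L) / b % 2 := by
  have hb : 0 < b := (abs_nonneg L).trans_lt hL
  obtain ⟨q, rfl⟩ := hH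
  have hdiv_two_mul : (4 * b * q + L) / (2 * b) = L / (2 * b) + 2 * q := by
    rw [show 4 * b * q + L = L + 2 * b * (2 * q) by ring, add_mul_ediv_left _ _ (by positivity)]
  have hdiv : (4 * b * q + L) / b = L / b + 4 * q := by
    rw [show 4 * b * q + L = L + b * (4 * q) by ring, add_mul_ediv_left _ _ hb.ne']
  rw [hdiv_two_mul, hdiv, ediv_eq_ite_of_abs_lt hL, ediv_eq_ite_of_abs_lt (by linarith)]
  split_ifs <;> omega

end Int

theorem bits_agree_of_small_perturbation (p : ℕ) (hp : 1 ≤ p) (H L A : ℤ)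
    (hH : (2 ^ (p + 1) : ℤ) ∣ H) (hL : |L| < 2 ^ (p - 1))
    (hA : A = H + L) (h0 : 0 ≤ A) :
    A.toNat / 2 ^ p % 2 = A.toNat / 2 ^ (p - 1) % 2 := by
  obtain ⟨k, rfl⟩ : ∃ k, p = k + 1 := ⟨p - 1, by omega⟩
  rw [Nat.add_sub_cancel] at hL ⊢
  have hbits : A / (2 * 2 ^ k) % 2 = A / 2 ^ k % 2 := by
    rw [hA]
    exact Int.add_ediv_two_mul_emod_two_eq (by convert hH using 1; ring) hL
  lift A to ℕ using h0
  rw [Int.toNat_natCast, pow_succ']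
  exact_mod_cast hbits
end

section
/- Carry propagation across constant runs: let x and y be naturals whose binary digits are constant on an interval [i, j] of bit positions (i.e., for all i ≤ t ≤ j, bit t of x equals bit i of x, and similarly for y). Then in the addition x + y, the carry out of position j equals the carry out of position i. Formally, with carry_t := ((x mod 2^(t+1)) + (y mod 2^(t+1))) / 2^(t+1), we have carry_j = carry_i. -/
/-- The carry into bit position `t` when adding `x` and `y`; the carry out of position `t` is
`carry x y (t + 1)`. -/
def carry (x y t : ℕ) : ℕ := (x % 2 ^ t + y % 2 ^ t) / 2 ^ t

theorem carry_succ (x y t : ℕ) :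
    carry x y (t + 1) = (x / 2 ^ t % 2 + y / 2 ^ t % 2 + carry x y t) / 2 := by
  have hpos : 0 < 2 ^ t := Nat.two_pow_pos t
  unfold carry
  rw [Nat.mod_pow_succ, Nat.mod_pow_succ, pow_succ, ← Nat.div_div_eq_div_mul,
    show x % 2 ^ t + 2 ^ t * (x / 2 ^ t % 2) + (y % 2 ^ t + 2 ^ t * (y / 2 ^ t % 2))
      = x % 2 ^ t + y % 2 ^ t + (x / 2 ^ t % 2 + y / 2 ^ t % 2) * 2 ^ t by ring,
    Nat.add_mul_div_right _ _ hpos, add_comm]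

theorem carry_le_one (x y t : ℕ) : carry x y t ≤ 1 := by
  have hx := Nat.mod_lt x (Nat.two_pow_pos t)
  have hy := Nat.mod_lt y (Nat.two_pow_pos t)
  unfold carry
  exact Nat.le_of_lt_succ (Nat.div_lt_of_lt_mul (by omega))

/-- A position whose digits repeat those of the previous one passes on the carry it receives:
with `s` the digit sum, `c ↦ (s + c) / 2` is idempotent on `{0, 1}` for `s ≤ 2`. -/
theorem carry_succ_succ_eq_of_digits_eq {x y t : ℕ}
    (hx : x / 2 ^ (t + 1) % 2 = x / 2 ^ t % 2) (hy : y / 2 ^ (t + 1) % 2 = y / 2 ^ t % 2) :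
    carry x y (t + 2) = carry x y (t + 1) := by
  have ha := Nat.mod_lt (x / 2 ^ t) two_pos
  have hb := Nat.mod_lt (y / 2 ^ t) two_pos
  have hc := carry_le_one x y t
  rw [carry_succ x y (t + 1), hx, hy, carry_succ]
  omega

theorem carry_across_constant_run (x y i j : ℕ) (hij : i ≤ j)
    (hx : ∀ t, i ≤ t → t ≤ j → x / 2 ^ t % 2 = x / 2 ^ i % 2)
    (hy : ∀ t, i ≤ t → t ≤ j → y / 2 ^ t % 2 = y / 2 ^ i % 2) :
    (x % 2 ^ (j + 1) + y % 2 ^ (j + 1)) / 2 ^ (j + 1)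
      = (x % 2 ^ (i + 1) + y % 2 ^ (i + 1)) / 2 ^ (i + 1) := by
  change carry x y (j + 1) = carry x y (i + 1)
  induction j, hij using Nat.le_induction with
  | base => rfl
  | succ j hij ih =>
    rw [carry_succ_succ_eq_of_digits_eq
      ((hx (j + 1) (by omega) le_rfl).trans (hx j hij (by omega)).symm)
      ((hy (j + 1) (by omega) le_rfl).trans (hy j hij (by omega)).symm)]
    exact ih (fun t h1 h2 => hx t h1 (by omega)) (fun t h1 h2 => hy t h1 (by omega))
end

section
/- Parallel comparison via subtraction with masked MSB: let m ≥ 1 and let a, b be naturals with a, b < 2^m. Write MSB = 2^(m-1) and Mask = 2^(m-1) - 1. Let a' = a AND Mask, b' = b AND Mask, and let c = ((a' + Mask) - b') AND MSB (the carry into the MSB position of (a' - b') + Mask). Define Carry = (c AND (a AND MSB)) OR ((c OR (a AND MSB)) AND NOT (b AND MSB)) (where x AND NOT y clears from x the bits of y). Then Carry = MSB if a > b, and Carry = 0 if a ≤ b. -/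
/-!
Put `k = m - 1` and split `a = 2^k α + a₀`, `b = 2^k β + b₀` with bits `α, β` and `a₀, b₀ < 2^k`.
Adding the mask `2^k - 1` makes `a₀ - b₀` borrow-free, and bit `k` of `a₀ + (2^k - 1) - b₀` is set
exactly when `b₀ < a₀`. Every operand of `Carry` is thus one bit at position `k`, so `Carry` is that
bit of the majority of `[b₀ < a₀]`, `α` and `¬β`, which is precisely the lexicographic test `b < a`.
-/

namespace Nat

theorem testBit_eq_decide_two_pow_le {x k : ℕ} (hx : x < 2 ^ (k + 1)) :
    x.testBit k = decide (2 ^ k ≤ x) := by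
  by_cases h : 2 ^ k ≤ x
  · simp [h, testBit_of_two_pow_le_and_two_pow_add_one_gt h hx]
  · simp [h, testBit_lt_two_pow (not_le.mp h)]

theorem two_pow_mul_toNat_testBit_add_mod {x k : ℕ} (hx : x < 2 ^ (k + 1)) :
    2 ^ k * (x.testBit k).toNat + x % 2 ^ k = x := by
  have hdiv : x / 2 ^ k < 2 := Nat.div_lt_of_lt_mul (by rwa [← pow_succ])
  rw [toNat_testBit, Nat.mod_eq_of_lt hdiv, Nat.div_add_mod]

theorem testBit_toNat_mul_two_pow (p : Bool) (k i : ℕ) :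
    (p.toNat * 2 ^ k).testBit i = (p && decide (k = i)) := by
  cases p <;> simp [testBit_two_pow]

theorem bitwise_toNat_mul_two_pow {f : Bool → Bool → Bool} (hf : f false false = false)
    (p q : Bool) (k : ℕ) :
    bitwise f (p.toNat * 2 ^ k) (q.toNat * 2 ^ k) = (f p q).toNat * 2 ^ k := by
  refine eq_of_testBit_eq fun i => ?_
  rw [testBit_bitwise hf]
  simp only [testBit_toNat_mul_two_pow]
  by_cases hi : k = i <;> simp [hi, hf]

theorem toNat_mul_two_pow_and (p q : Bool) (k : ℕ) :
    p.toNat * 2 ^ k &&& q.toNat * 2 ^ k = (p && q).toNat * 2 ^ k :=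
  bitwise_toNat_mul_two_pow rfl p q k

theorem toNat_mul_two_pow_or (p q : Bool) (k : ℕ) :
    p.toNat * 2 ^ k ||| q.toNat * 2 ^ k = (p || q).toNat * 2 ^ k :=
  bitwise_toNat_mul_two_pow rfl p q k

theorem ldiff_toNat_mul_two_pow (p q : Bool) (k : ℕ) :
    ldiff (p.toNat * 2 ^ k) (q.toNat * 2 ^ k) = (p && !q).toNat * 2 ^ k :=
  bitwise_toNat_mul_two_pow rfl p q k

theorem add_two_pow_sub_one_sub_and_two_pow {x y k : ℕ} (hx : x < 2 ^ k) (hy : y < 2 ^ k) :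
    (x + (2 ^ k - 1) - y) &&& 2 ^ k = (decide (y < x)).toNat * 2 ^ k := by
  rw [and_two_pow, testBit_eq_decide_two_pow_le (by rw [pow_succ]; omega)]
  congr 2
  exact decide_eq_decide.mpr (by omega)

theorem decide_lt_eq_carry_of_lt_two_pow_succ {a b k : ℕ} (ha : a < 2 ^ (k + 1))
    (hb : b < 2 ^ (k + 1)) :
    decide (b < a) = (decide (b % 2 ^ k < a % 2 ^ k) && a.testBit k ||
      (decide (b % 2 ^ k < a % 2 ^ k) || a.testBit k) && !b.testBit k) := by
  have hpos := Nat.two_pow_pos k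
  have ha' := mod_lt a hpos
  have hb' := mod_lt b hpos
  have hadec := two_pow_mul_toNat_testBit_add_mod ha
  have hbdec := two_pow_mul_toNat_testBit_add_mod hb
  generalize a.testBit k = α at *
  generalize b.testBit k = β at *
  generalize a % 2 ^ k = a₀ at *
  generalize b % 2 ^ k = b₀ at *
  subst hadec hbdec
  cases α <;> cases β <;> simp <;> omega

end Nat

open Nat in
theorem parallel_comparison_general (m a b : ℕ) (ha : a < 2 ^ m) (hb : b < 2 ^ m) :
    let MSB := 2 ^ (m - 1)
    let Mask := 2 ^ (m - 1) - 1
    let a' := a &&& Mask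
    let b' := b &&& Mask
    let c := ((a' + Mask) - b') &&& MSB
    let Carry := (c &&& (a &&& MSB)) ||| Nat.ldiff (c ||| (a &&& MSB)) (b &&& MSB)
    Carry = if b < a then MSB else 0 := by
  intro MSB Mask a' b' c Carry
  have hpow : 2 ^ m ≤ 2 ^ (m - 1 + 1) := Nat.pow_le_pow_right two_pos (by omega)
  have hc : c = (decide (b % 2 ^ (m - 1) < a % 2 ^ (m - 1))).toNat * 2 ^ (m - 1) := by
    simp only [c, a', b', Mask, MSB, and_two_pow_sub_one_eq_mod]
    exact add_two_pow_sub_one_sub_and_two_pow (mod_lt a (Nat.two_pow_pos _))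
      (mod_lt b (Nat.two_pow_pos _))
  have hCarry : Carry = (decide (b < a)).toNat * 2 ^ (m - 1) := by
    simp only [Carry, hc, MSB, and_two_pow, toNat_mul_two_pow_and, toNat_mul_two_pow_or,
      ldiff_toNat_mul_two_pow,
      decide_lt_eq_carry_of_lt_two_pow_succ (ha.trans_le hpow) (hb.trans_le hpow)]
  rw [hCarry]
  split_ifs with h <;> simp [h, MSB]

theorem parallel_comparison (m a b : ℕ) (hm : 1 ≤ m) (ha : a < 2 ^ m) (hb : b < 2 ^ m) :
    let MSB := 2 ^ (m - 1)
    let Mask := 2 ^ (m - 1) - 1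
    let a' := a &&& Mask
    let b' := b &&& Mask
    let c := ((a' + Mask) - b') &&& MSB
    let Carry := (c &&& (a &&& MSB)) ||| Nat.ldiff (c ||| (a &&& MSB)) (b &&& MSB)
    Carry = if b < a then MSB else 0 :=
  parallel_comparison_general m a b ha hb
end

section
/- For naturals m ≥ 1, a < 2^(m-1), n ≥ 1: the number V = ((a * 2^(n*m)) - a) / (2^m - 1) satisfies V AND O = 0 where O = ((2^(m-1) * 2^(n*m)) - 2^(m-1)) / (2^m - 1); i.e., the all-a vector of width m has empty bitwise intersection with the all-MSB-mask vector, since each element a of the first has zero MSB. -/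
private def geom (m : ℕ) : ℕ → ℕ
  | 0 => 0
  | n + 1 => geom m n * 2 ^ m + 1

private lemma geom_spec (m : ℕ) : ∀ n, (2 ^ m - 1) * geom m n + 1 = 2 ^ (n * m) := by
  intro n
  induction n with
  | zero => simp [geom]
  | succ n ih =>
    have h1 : 1 ≤ 2 ^ m := Nat.one_le_two_pow
    simp only [geom, Nat.succ_mul, pow_add]
    zify [h1] at ih ⊢
    rw [← ih]; ring

private lemma key (m a b x y : ℕ) (ha : a < 2 ^ m) (hb : b < 2 ^ m)
    (hab : a &&& b = 0) (hxy : x &&& y = 0) :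
    (x * 2 ^ m + a) &&& (y * 2 ^ m + b) = 0 := by
  rw [Nat.mul_comm x, Nat.mul_comm y]
  apply Nat.eq_of_testBit_eq
  intro j
  rw [Nat.testBit_and, Nat.testBit_two_pow_mul_add _ ha, Nat.testBit_two_pow_mul_add _ hb,
    Nat.zero_testBit]
  by_cases h : j < m
  · simp only [h, if_true]
    have := congrArg (fun t => Nat.testBit t j) hab
    simpa using this
  · simp only [h, if_false]
    have := congrArg (fun t => Nat.testBit t (j - m)) hxy
    simpa using this

private lemma repl (m a b : ℕ) (ha : a < 2 ^ m) (hb : b < 2 ^ m) (hab : a &&& b = 0) :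
    ∀ n, (a * geom m n) &&& (b * geom m n) = 0 := by
  intro n
  induction n with
  | zero => simp [geom]
  | succ n ih =>
    have h1 : a * geom m (n + 1) = (a * geom m n) * 2 ^ m + a := by
      simp [geom]; ring
    have h2 : b * geom m (n + 1) = (b * geom m n) * 2 ^ m + b := by
      simp [geom]; ring
    rw [h1, h2]
    exact key m a b _ _ ha hb hab ih

theorem msb_disjoint (m a n : ℕ) (hm : 1 ≤ m) (ha : a < 2 ^ (m - 1)) (hn : 1 ≤ n) :
    ((a * 2 ^ (n * m) - a) / (2 ^ m - 1)) &&&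
      ((2 ^ (m - 1) * 2 ^ (n * m) - 2 ^ (m - 1)) / (2 ^ m - 1)) = 0 := by
  have hpos : 0 < 2 ^ m - 1 := by
    have : 2 ^ 1 ≤ 2 ^ m := Nat.pow_le_pow_right (by norm_num) hm
    omega
  have hdiv : ∀ c : ℕ, (c * 2 ^ (n * m) - c) / (2 ^ m - 1) = c * geom m n := by
    intro c
    have h := geom_spec m n
    have : c * 2 ^ (n * m) - c = (2 ^ m - 1) * (c * geom m n) := by
      have : c * 2 ^ (n * m) = c * ((2 ^ m - 1) * geom m n) + c := by
        rw [← h]; ring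
      rw [this]; ring_nf; omega
    rw [this, Nat.mul_div_cancel_left _ hpos]
  rw [hdiv, hdiv]
  have hb : 2 ^ (m - 1) < 2 ^ m := Nat.pow_lt_pow_right (by norm_num) (by omega)
  have hab : a &&& 2 ^ (m - 1) = 0 := by
    rw [Nat.and_two_pow, Nat.testBit_lt_two_pow ha]
    simp
  exact repl m a (2 ^ (m - 1)) (ha.trans hb) hb hab n
end
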